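/- arXiv:2603.29649 — 6 statements merged into one kernel-verified Lean document; each statement's English description precedes it below -/
import Mathlib

section
/- Let D ≥ 0 and assume 𝒳_D is nonempty. If the transmission capacity of the forward marginal channel W̃ is zero, i.e., I(X;Y) = 0 under the joint law P_X(x)W̃(y|x) for every pmf P_X on 𝒳, then C_DIF(D) = 0. (Zero-capacity case of Theorem 1.) -/
open Finset

/-- A probability mass function on a finite type. -/
def IsPMF {A : Type*} [Fintype A] (p : A → ℝ) : Prop :=
  (∀ a, 0 ≤ p a) ∧ ∑ a, p a = 1

/-- Mutual information `I(A;B)` of a joint pmf `p` on `A × B`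
(with the convention `0 log 0 = 0`, `log (x/0) = log 0 = 0`). -/
noncomputable def mutInf {A B : Type*} [Fintype A] [Fintype B] (p : A → B → ℝ) : ℝ :=
  ∑ a, ∑ b, p a b * Real.log (p a b / ((∑ b', p a b') * (∑ a', p a' b)))

/-- Conditional mutual information `I(A;B|C)` of a joint pmf `p` on `A × B × C`. -/
noncomputable def condMutInf {A B C : Type*} [Fintype A] [Fintype B] [Fintype C]
    (p : A → B → C → ℝ) : ℝ :=
  ∑ a, ∑ b, ∑ c, p a b c * Real.log ((p a b c * ∑ a', ∑ b', p a' b' c) /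
      ((∑ b', p a b' c) * (∑ a', p a' b c)))

/-- Length-`n` feedback encoding functions: `f^1 ∈ 𝒳` (a constant, since `Fin 0 → 𝒵` is
a singleton) and `f^t : 𝒵^{t-1} → 𝒳`. -/
abbrev EncFn (𝒳 𝒵 : Type*) (n : ℕ) := ∀ t : Fin n, (Fin t.val → 𝒵) → 𝒳

variable {𝒳 𝒮 𝒴 𝒵 : Type*} [Fintype 𝒳] [Fintype 𝒮] [Fintype 𝒴] [Fintype 𝒵]
  [DecidableEq 𝒴] [DecidableEq 𝒵]

/-- `W^n(y^n, z^n | f, s^n) = ∏_t W(y_t, z_t | f^t(z^{t-1}), s_t)`. -/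
noncomputable def Wn (W : 𝒳 → 𝒮 → 𝒴 → 𝒵 → ℝ) {n : ℕ}
    (f : EncFn 𝒳 𝒵 n) (s : Fin n → 𝒮) (y : Fin n → 𝒴) (z : Fin n → 𝒵) : ℝ :=
  ∏ t, W (f t fun j => z (Fin.castLE t.isLt.le j)) (s t) (y t) (z t)

/-- `∑_{z^n} ∑_{s^n} P_S^n(s^n) W^n(A, z^n | f, s^n)` for `A ⊆ 𝒴^n`. -/
noncomputable def errMass (W : 𝒳 → 𝒮 → 𝒴 → 𝒵 → ℝ) (PS : 𝒮 → ℝ) {n : ℕ}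
    (f : EncFn 𝒳 𝒵 n) (A : Finset (Fin n → 𝒴)) : ℝ :=
  ∑ z : Fin n → 𝒵, ∑ s : Fin n → 𝒮, (∏ t, PS (s t)) * ∑ y ∈ A, Wn W f s y z

/-- Expected per-symbol distortion `E[d(S_t, h(X_t, Z_t))]` at time `t` under encoder `f`. -/
noncomputable def distAt (W : 𝒳 → 𝒮 → 𝒴 → 𝒵 → ℝ) (PS : 𝒮 → ℝ) (d : 𝒮 → 𝒮 → ℝ)
    (h : 𝒳 → 𝒵 → 𝒮) {n : ℕ} (f : EncFn 𝒳 𝒵 n) (t : Fin n) : ℝ :=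
  ∑ s : Fin n → 𝒮, ∑ y : Fin n → 𝒴, ∑ z : Fin n → 𝒵,
    (∏ t', PS (s t')) * Wn W f s y z *
      d (s t) (h (f t fun j => z (Fin.castLE t.isLt.le j)) (z t))

/-- The conditional pmf `P_{S|XZ}(s | x, z)` induced by `S ~ P_S`, `(Y,Z) ~ W(·,·|x,S)`. -/
noncomputable def condS (W : 𝒳 → 𝒮 → 𝒴 → 𝒵 → ℝ) (PS : 𝒮 → ℝ) (x : 𝒳) (z : 𝒵) (s : 𝒮) : ℝ :=
  PS s * (∑ y, W x s y z) / ∑ s', PS s' * ∑ y, W x s' y z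

/-- `d*(x) = E[d(S, h(x,Z)) | X = x]`. -/
noncomputable def dstar (W : 𝒳 → 𝒮 → 𝒴 → 𝒵 → ℝ) (PS : 𝒮 → ℝ) (d : 𝒮 → 𝒮 → ℝ)
    (h : 𝒳 → 𝒵 → 𝒮) (x : 𝒳) : ℝ :=
  ∑ s, ∑ z, PS s * (∑ y, W x s y z) * d s (h x z)

/-- Existence of an `(n, N, l1, l2)` DIF code with sensing, per-symbol distortion `≤ D`. -/
def IsDIFCode (W : 𝒳 → 𝒮 → 𝒴 → 𝒵 → ℝ) (PS : 𝒮 → ℝ) (d : 𝒮 → 𝒮 → ℝ) (h : 𝒳 → 𝒵 → 𝒮)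
    (n N : ℕ) (l1 l2 D : ℝ) : Prop :=
  ∃ (f : Fin N → EncFn 𝒳 𝒵 n) (Ds : Fin N → Finset (Fin n → 𝒴)),
    (∀ i, errMass W PS (f i) (Ds i)ᶜ ≤ l1) ∧
    (∀ i j, i ≠ j → errMass W PS (f i) (Ds j) ≤ l2) ∧
    (∀ i t, distAt W PS d h (f i) t ≤ D)

/-- The maximal number of messages of a DIF code with sensing. -/
noncomputable def NDIF (W : 𝒳 → 𝒮 → 𝒴 → 𝒵 → ℝ) (PS : 𝒮 → ℝ) (d : 𝒮 → 𝒮 → ℝ)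
    (h : 𝒳 → 𝒵 → 𝒮) (n : ℕ) (l1 l2 D : ℝ) : ℕ :=
  sSup {N | IsDIFCode W PS d h n N l1 l2 D}

/-- The DIF capacity-distortion function
`C_DIF(D) = inf_{λ1,λ2>0, λ1+λ2<1} liminf_n (log log N_DIF)/n`. -/
noncomputable def CDIF (W : 𝒳 → 𝒮 → 𝒴 → 𝒵 → ℝ) (PS : 𝒮 → ℝ) (d : 𝒮 → 𝒮 → ℝ)
    (h : 𝒳 → 𝒵 → 𝒮) (D : ℝ) : ℝ :=
  sInf {r | ∃ l1 l2 : ℝ, 0 < l1 ∧ 0 < l2 ∧ l1 + l2 < 1 ∧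
    r = Filter.atTop.liminf fun n =>
      Real.log (Real.log (NDIF W PS d h n l1 l2 D)) / n}

section Aux

/-- Termwise Gibbs inequality and its equality case: if `∑ p = ∑ q`, `q` dominates `p`,
and the "KL divergence" (with Lean's junk conventions) vanishes, then `p = q`. -/
lemma kl_eq_zero_imp {ι : Type*} [Fintype ι] (p q : ι → ℝ)
    (hp : ∀ i, 0 ≤ p i) (hq : ∀ i, 0 ≤ q i)
    (hsum : ∑ i, p i = ∑ i, q i)
    (habs : ∀ i, q i = 0 → p i = 0)
    (hkl : ∑ i, p i * Real.log (p i / q i) = 0) : ∀ i, p i = q i := by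
  have key : ∀ i, p i - q i ≤ p i * Real.log (p i / q i) := by
    intro i
    rcases (hp i).eq_or_lt with hpi | hpi
    · rw [← hpi]; simp; linarith [hq i]
    · have hqi : 0 < q i := by
        rcases (hq i).eq_or_lt with hqi | hqi
        · exfalso; have := habs i hqi.symm; linarith
        · exact hqi
      have h1 := Real.log_le_sub_one_of_pos (div_pos hqi hpi)
      rw [Real.log_div hqi.ne' hpi.ne'] at h1
      rw [Real.log_div hpi.ne' hqi.ne']
      have h2 : p i * (Real.log (q i) - Real.log (p i)) ≤ p i * (q i / p i - 1) :=
        mul_le_mul_of_nonneg_left h1 (hp i)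
      have h3 : p i * (q i / p i - 1) = q i - p i := by field_simp
      nlinarith
  have hsum2 : ∑ i, (p i - q i) = ∑ i, p i * Real.log (p i / q i) := by
    rw [Finset.sum_sub_distrib, hsum, hkl]; ring
  have heq := (Finset.sum_eq_sum_iff_of_le (fun i _ => key i)).1 hsum2
  intro i
  have hi := heq i (Finset.mem_univ i)
  rcases (hp i).eq_or_lt with hpi | hpi
  · rw [← hpi] at hi ⊢
    simp at hi; linarith
  · have hqi : 0 < q i := by
      rcases (hq i).eq_or_lt with hqi | hqi
      · exfalso; have := habs i hqi.symm; linarith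
      · exact hqi
    by_contra hne
    have hr : q i / p i ≠ 1 := by
      intro hh
      rw [div_eq_one_iff_eq hpi.ne'] at hh
      exact hne hh.symm
    have h1 := Real.log_lt_sub_one_of_pos (div_pos hqi hpi) hr
    rw [Real.log_div hqi.ne' hpi.ne'] at h1
    rw [Real.log_div hpi.ne' hqi.ne'] at hi
    have h2 : p i * (Real.log (q i) - Real.log (p i)) < p i * (q i / p i - 1) :=
      (mul_lt_mul_iff_right₀ hpi).2 h1
    have h3 : p i * (q i / p i - 1) = q i - p i := by field_simp
    nlinarith
  
/-- If a joint pmf has zero mutual information, it is a product of its marginals. -/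
lemma mutInf_eq_zero_indep {A B : Type*} [Fintype A] [Fintype B] (p : A → B → ℝ)
    (h0 : ∀ a b, 0 ≤ p a b) (h1 : ∑ a, ∑ b, p a b = 1) (hI : mutInf p = 0) :
    ∀ a b, p a b = (∑ b', p a b') * (∑ a', p a' b) := by
  set q : A → B → ℝ := fun a b => (∑ b', p a b') * (∑ a', p a' b) with hqdef
  have key := kl_eq_zero_imp (fun x : A × B => p x.1 x.2) (fun x : A × B => q x.1 x.2)
    (fun x => h0 x.1 x.2)
    (fun x => mul_nonneg (Finset.sum_nonneg fun b _ => h0 x.1 b)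
      (Finset.sum_nonneg fun a _ => h0 a x.2))
    (by
      rw [Fintype.sum_prod_type, Fintype.sum_prod_type]
      rw [h1]
      have : ∑ a, ∑ b, q a b = (∑ a, ∑ b', p a b') * (∑ b, ∑ a', p a' b) := by
        rw [Finset.sum_mul]
        refine Finset.sum_congr rfl fun a _ => ?_
        rw [Finset.mul_sum]
      rw [this, h1, Finset.sum_comm, h1, one_mul])
    (by
      intro x hx
      have h2 : p x.1 x.2 * p x.1 x.2 ≤ q x.1 x.2 := by
        have ha : p x.1 x.2 ≤ ∑ b', p x.1 b' :=
          Finset.single_le_sum (fun b _ => h0 x.1 b) (Finset.mem_univ x.2)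
        have hb : p x.1 x.2 ≤ ∑ a', p a' x.2 :=
          Finset.single_le_sum (fun a _ => h0 a x.2) (Finset.mem_univ x.1)
        exact mul_le_mul ha hb (h0 x.1 x.2) (Finset.sum_nonneg fun b _ => h0 x.1 b)
      nlinarith [h0 x.1 x.2])
    (by rw [Fintype.sum_prod_type]; exact hI)
  exact fun a b => key (a, b)

variable {𝒳 𝒮 𝒴 𝒵 : Type*} [Fintype 𝒳] [Fintype 𝒮] [Fintype 𝒴] [Fintype 𝒵]
  [DecidableEq 𝒴] [DecidableEq 𝒵]

lemma snoc_lt {n : ℕ} {α : Type*} (z' : Fin n → α) (c : α) (i : Fin (n + 1))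
    (hi : i.val < n) : (Fin.snoc z' c : Fin (n + 1) → α) i = z' ⟨i.val, hi⟩ := by
  simp only [Fin.snoc, hi, dif_pos, cast_eq]
  rfl

/-- Key feedback-channel computation: if `∑_z V(x, y, z)` does not depend on `x`, then the
`y`-marginal of an adaptively encoded product channel is i.i.d. -/
lemma sum_feedback (V : 𝒳 → 𝒴 → 𝒵 → ℝ) (Q : 𝒴 → ℝ)
    (hV : ∀ x y, ∑ z, V x y z = Q y) :
    ∀ {n : ℕ} (f : EncFn 𝒳 𝒵 n) (y : Fin n → 𝒴),
      ∑ z : Fin n → 𝒵, ∏ t, V (f t fun j => z (Fin.castLE t.isLt.le j)) (y t) (z t)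
        = ∏ t, Q (y t) := by
  intro n
  induction n with
  | zero => intro f y; simp
  | succ n ih =>
    intro f y
    rw [← Equiv.sum_comp (Fin.snocEquiv (fun _ : Fin (n + 1) => 𝒵)), Fintype.sum_prod_type]
    have hterm : ∀ (c : 𝒵) (z' : Fin n → 𝒵),
        (∏ t : Fin (n + 1),
          V (f t fun j => (Fin.snocEquiv (fun _ => 𝒵) (c, z')) (Fin.castLE t.isLt.le j))
            (y t) ((Fin.snocEquiv (fun _ => 𝒵) (c, z')) t))
        = (∏ t : Fin n,
            V ((fun (u : Fin n) (w : Fin u.val → 𝒵) => f u.castSucc w) t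
                fun j => z' (Fin.castLE t.isLt.le j))
              (y t.castSucc) (z' t)) * V (f (Fin.last n) z') (y (Fin.last n)) c := by
      intro c z'
      have hsnoc : (Fin.snocEquiv (fun _ : Fin (n + 1) => 𝒵) (c, z') : Fin (n + 1) → 𝒵)
          = Fin.snoc z' c := by funext i; rfl
      rw [hsnoc, Fin.prod_univ_castSucc]
      congr 1
      · refine Finset.prod_congr rfl fun t _ => ?_
        refine congrArg₂
          (fun (w : Fin (t.castSucc : Fin (n + 1)).val → 𝒵) (zz : 𝒵) =>
            V (f t.castSucc w) (y t.castSucc) zz) ?_ ?_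
        · funext j; exact snoc_lt z' c _ (lt_of_lt_of_le j.isLt t.isLt.le)
        · exact Fin.snoc_castSucc (α := fun _ => 𝒵) (p := z') (x := c) (i := t)
      · refine congrArg₂
          (fun (w : Fin n → 𝒵) (zz : 𝒵) => V (f (Fin.last n) w) (y (Fin.last n)) zz) ?_ ?_
        · funext j; exact snoc_lt z' c _ j.isLt
        · exact Fin.snoc_last (α := fun _ => 𝒵) (p := z') (x := c)
    calc ∑ c : 𝒵, ∑ z' : Fin n → 𝒵,
          ∏ t : Fin (n + 1),
            V (f t fun j => (Fin.snocEquiv (fun _ => 𝒵) (c, z')) (Fin.castLE t.isLt.le j))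
              (y t) ((Fin.snocEquiv (fun _ => 𝒵) (c, z')) t)
        = ∑ z' : Fin n → 𝒵, ∑ c : 𝒵,
            (∏ t : Fin n,
              V ((fun (u : Fin n) (w : Fin u.val → 𝒵) => f u.castSucc w) t
                  fun j => z' (Fin.castLE t.isLt.le j))
                (y t.castSucc) (z' t)) * V (f (Fin.last n) z') (y (Fin.last n)) c := by
          rw [Finset.sum_comm]
          exact Finset.sum_congr rfl fun z' _ => Finset.sum_congr rfl fun c _ => hterm c z'
      _ = ∑ z' : Fin n → 𝒵,
            (∏ t : Fin n,
              V ((fun (u : Fin n) (w : Fin u.val → 𝒵) => f u.castSucc w) t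
                  fun j => z' (Fin.castLE t.isLt.le j))
                (y t.castSucc) (z' t)) * Q (y (Fin.last n)) := by
          refine Finset.sum_congr rfl fun z' _ => ?_
          rw [← Finset.mul_sum, hV]
      _ = (∏ t : Fin n, Q (y t.castSucc)) * Q (y (Fin.last n)) := by
          rw [← Finset.sum_mul, ih (fun u w => f u.castSucc w) (fun t => y t.castSucc)]
      _ = ∏ t : Fin (n + 1), Q (y t) := (Fin.prod_univ_castSucc fun t => Q (y t)).symm

/-- Factorization of a triple product-form sum over tuples. -/
lemma sum3_pi_prod {n : ℕ} {S Y Z : Type*} [Fintype S] [Fintype Y] [Fintype Z]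
    (F : Fin n → S → Y → Z → ℝ) :
    ∑ s : Fin n → S, ∑ y : Fin n → Y, ∑ z : Fin n → Z, ∏ t, F t (s t) (y t) (z t)
      = ∏ t, ∑ a, ∑ b, ∑ c, F t a b c := by
  calc ∑ s : Fin n → S, ∑ y : Fin n → Y, ∑ z : Fin n → Z, ∏ t, F t (s t) (y t) (z t)
      = ∑ s : Fin n → S, ∑ y : Fin n → Y, ∏ t, ∑ c, F t (s t) (y t) c := by
        refine Finset.sum_congr rfl fun s _ => Finset.sum_congr rfl fun y _ => ?_
        exact (Fintype.prod_sum fun t c => F t (s t) (y t) c).symm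
    _ = ∑ s : Fin n → S, ∏ t, ∑ b, ∑ c, F t (s t) b c := by
        refine Finset.sum_congr rfl fun s _ => ?_
        exact (Fintype.prod_sum fun t b => ∑ c, F t (s t) b c).symm
    _ = ∏ t, ∑ a, ∑ b, ∑ c, F t a b c :=
        (Fintype.prod_sum fun t a => ∑ b, ∑ c, F t a b c).symm


/-- The per-symbol distortion of a constant encoder equals `d*`. -/
lemma distAt_const (W : 𝒳 → 𝒮 → 𝒴 → 𝒵 → ℝ) (PS : 𝒮 → ℝ) (d : 𝒮 → 𝒮 → ℝ) (h : 𝒳 → 𝒵 → 𝒮)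
    (hW : ∀ x s, (∀ y z, 0 ≤ W x s y z) ∧ ∑ y, ∑ z, W x s y z = 1) (hPS : IsPMF PS)
    (x0 : 𝒳) {n : ℕ} (t : Fin n) :
    distAt W PS d h (fun _ _ => x0) t = dstar W PS d h x0 := by
  have hstep : ∀ (s : Fin n → 𝒮) (y : Fin n → 𝒴) (z : Fin n → 𝒵),
      (∏ t', PS (s t')) * (∏ t', W x0 (s t') (y t') (z t')) * d (s t) (h x0 (z t))
        = ∏ t', (PS (s t') * W x0 (s t') (y t') (z t') *
            (if t' = t then d (s t') (h x0 (z t')) else 1)) := by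
    intro s y z
    rw [Finset.prod_mul_distrib, Finset.prod_mul_distrib,
      Finset.prod_ite_eq' Finset.univ t (fun t' => d (s t') (h x0 (z t'))),
      if_pos (Finset.mem_univ t)]
  calc distAt W PS d h (fun _ _ => x0) t
      = ∑ s : Fin n → 𝒮, ∑ y : Fin n → 𝒴, ∑ z : Fin n → 𝒵,
          ∏ t', (PS (s t') * W x0 (s t') (y t') (z t') *
            (if t' = t then d (s t') (h x0 (z t')) else 1)) := by
        unfold distAt Wn
        exact Finset.sum_congr rfl fun s _ => Finset.sum_congr rfl fun y _ =>
          Finset.sum_congr rfl fun z _ => hstep s y z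
    _ = ∏ t', ∑ a, ∑ b, ∑ c, (PS a * W x0 a b c * (if t' = t then d a (h x0 c) else 1)) :=
        sum3_pi_prod (fun t' a b c => PS a * W x0 a b c * (if t' = t then d a (h x0 c) else 1))
    _ = ∏ t' : Fin n, (if t' = t then dstar W PS d h x0 else 1) := by
        refine Finset.prod_congr rfl fun t' _ => ?_
        by_cases ht : t' = t
        · rw [if_pos ht]
          simp only [if_pos ht]
          unfold dstar
          refine Finset.sum_congr rfl fun a _ => ?_
          rw [Finset.sum_comm]
          refine Finset.sum_congr rfl fun c _ => ?_
          rw [← Finset.sum_mul, ← Finset.mul_sum]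
        · rw [if_neg ht]
          simp only [if_neg ht, mul_one]
          calc ∑ a, ∑ b, ∑ c, PS a * W x0 a b c
              = ∑ a, PS a * ∑ b, ∑ c, W x0 a b c := by
                refine Finset.sum_congr rfl fun a _ => ?_
                simp only [Finset.mul_sum]
            _ = ∑ a, PS a := by
                refine Finset.sum_congr rfl fun a _ => ?_
                rw [(hW x0 a).2, mul_one]
            _ = 1 := hPS.2
    _ = dstar W PS d h x0 := by
        rw [Finset.prod_ite_eq' Finset.univ t (fun _ => dstar W PS d h x0),
          if_pos (Finset.mem_univ t)]

end Aux

/-- Zero-capacity case of Theorem 1: if the transmission capacity of the forward marginal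
channel `W̃(y|x) = ∑_z ∑_s P_S(s) W(y,z|x,s)` is zero, i.e. `I(X;Y) = 0` for every input
pmf, and `𝒳_D` is nonempty, then `C_DIF(D) = 0`. -/
theorem DIF_capacity_distortion_zero [Nonempty 𝒮]
    (W : 𝒳 → 𝒮 → 𝒴 → 𝒵 → ℝ) (PS : 𝒮 → ℝ) (d : 𝒮 → 𝒮 → ℝ) (h : 𝒳 → 𝒵 → 𝒮)
    (hW : ∀ x s, (∀ y z, 0 ≤ W x s y z) ∧ ∑ y, ∑ z, W x s y z = 1)
    (hPS : IsPMF PS) (hd : ∀ s s', 0 ≤ d s s')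
    (hEst : ∀ (x : 𝒳) (z : 𝒵) (s' : 𝒮),
      ∑ s, condS W PS x z s * d s (h x z) ≤ ∑ s, condS W PS x z s * d s s')
    (D : ℝ) (hD : 0 ≤ D)
    (hne : ∃ x, dstar W PS d h x ≤ D)
    (hzero : ∀ pX : 𝒳 → ℝ, IsPMF pX →
      mutInf (fun x y => pX x * ∑ z, ∑ s, PS s * W x s y z) = 0) :
    CDIF W PS d h D = 0 := by
  classical
  obtain ⟨x0, hx0⟩ := hne
  -- basic facts about the forward marginal channel
  have hWtnn : ∀ x y, 0 ≤ ∑ z, ∑ s, PS s * W x s y z := fun x y =>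
    Finset.sum_nonneg fun z _ => Finset.sum_nonneg fun s _ =>
      mul_nonneg (hPS.1 s) ((hW x s).1 y z)
  have hWtsum : ∀ x, ∑ y, ∑ z, ∑ s, PS s * W x s y z = 1 := by
    intro x
    calc ∑ y, ∑ z, ∑ s, PS s * W x s y z
        = ∑ y, ∑ s, ∑ z, PS s * W x s y z :=
          Finset.sum_congr rfl fun y _ => Finset.sum_comm
      _ = ∑ s, ∑ y, ∑ z, PS s * W x s y z := Finset.sum_comm
      _ = ∑ s, PS s * ∑ y, ∑ z, W x s y z := by
          refine Finset.sum_congr rfl fun s _ => ?_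
          simp only [Finset.mul_sum]
      _ = ∑ s, PS s := by
          refine Finset.sum_congr rfl fun s _ => ?_
          rw [(hW x s).2, mul_one]
      _ = 1 := hPS.2
  -- zero capacity forces the forward marginal channel to be input-independent
  have hconst : ∀ x y, ∑ z, ∑ s, PS s * W x s y z = ∑ z, ∑ s, PS s * W x0 s y z := by
    intro x1 y
    by_cases hx : x1 = x0
    · rw [hx]
    · set pX : 𝒳 → ℝ :=
        fun x => (if x = x1 then (2:ℝ)⁻¹ else 0) + (if x = x0 then (2:ℝ)⁻¹ else 0) with hpXdef
      have hpmf : IsPMF pX := by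
        constructor
        · intro a; dsimp [pX]; split_ifs <;> norm_num
        · dsimp [pX]
          rw [Finset.sum_add_distrib,
            Finset.sum_ite_eq' Finset.univ x1 (fun _ => (2:ℝ)⁻¹),
            Finset.sum_ite_eq' Finset.univ x0 (fun _ => (2:ℝ)⁻¹)]
          simp; norm_num
      have hrow : ∀ a, ∑ b', pX a * ∑ z, ∑ s, PS s * W a s b' z = pX a := by
        intro a; rw [← Finset.mul_sum, hWtsum a, mul_one]
      have hind := mutInf_eq_zero_indep (fun x y => pX x * ∑ z, ∑ s, PS s * W x s y z)
        (fun a b => mul_nonneg (hpmf.1 a) (hWtnn a b))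
        (by
          calc ∑ a, ∑ b, pX a * ∑ z, ∑ s, PS s * W a s b z
              = ∑ a, pX a := Finset.sum_congr rfl fun a _ => hrow a
            _ = 1 := hpmf.2)
        (hzero pX hpmf)
      have h1 := hind x1 y
      have h2 := hind x0 y
      rw [hrow x1] at h1
      rw [hrow x0] at h2
      have hpos1 : pX x1 = 2⁻¹ := by
        dsimp [pX]; rw [if_pos rfl, if_neg hx, add_zero]
      have hpos0 : pX x0 = 2⁻¹ := by
        dsimp [pX]; rw [if_pos rfl, if_neg (fun hh => hx hh.symm), zero_add]
      have e1 : ∑ z, ∑ s, PS s * W x1 s y z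
          = ∑ a', pX a' * ∑ z, ∑ s, PS s * W a' s y z := by
        refine mul_left_cancel₀ (a := pX x1) (by rw [hpos1]; norm_num) ?_
        exact h1
      have e0 : ∑ z, ∑ s, PS s * W x0 s y z
          = ∑ a', pX a' * ∑ z, ∑ s, PS s * W a' s y z := by
        refine mul_left_cancel₀ (a := pX x0) (by rw [hpos0]; norm_num) ?_
        exact h2
      exact e1.trans e0.symm
  -- the error mass is independent of the encoder
  have hErr : ∀ {n : ℕ} (f : EncFn 𝒳 𝒵 n) (A : Finset (Fin n → 𝒴)),
      errMass W PS f A = ∑ y ∈ A, ∏ t, (∑ z, ∑ s, PS s * W x0 s (y t) z) := by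
    intro n f A
    have hV : ∀ x b, ∑ c : 𝒵, ∑ a : 𝒮, PS a * W x a b c
        = ∑ z, ∑ s, PS s * W x0 s b z := fun x b => hconst x b
    calc errMass W PS f A
        = ∑ z : Fin n → 𝒵, ∑ s : Fin n → 𝒮, ∑ y ∈ A,
            ∏ t, (PS (s t) * W (f t fun j => z (Fin.castLE t.isLt.le j)) (s t) (y t) (z t)) := by
          unfold errMass Wn
          refine Finset.sum_congr rfl fun z _ => Finset.sum_congr rfl fun s _ => ?_
          rw [Finset.mul_sum]
          refine Finset.sum_congr rfl fun y _ => ?_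
          rw [← Finset.prod_mul_distrib]
      _ = ∑ y ∈ A, ∑ z : Fin n → 𝒵, ∑ s : Fin n → 𝒮,
            ∏ t, (PS (s t) * W (f t fun j => z (Fin.castLE t.isLt.le j)) (s t) (y t) (z t)) := by
          exact (Finset.sum_congr rfl fun z _ => Finset.sum_comm).trans Finset.sum_comm
      _ = ∑ y ∈ A, ∑ z : Fin n → 𝒵,
            ∏ t, ∑ a, PS a * W (f t fun j => z (Fin.castLE t.isLt.le j)) a (y t) (z t) := by
          refine Finset.sum_congr rfl fun y _ => Finset.sum_congr rfl fun z _ => ?_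
          exact (Fintype.prod_sum fun t a =>
            PS a * W (f t fun j => z (Fin.castLE t.isLt.le j)) a (y t) (z t)).symm
      _ = ∑ y ∈ A, ∏ t, (∑ z, ∑ s, PS s * W x0 s (y t) z) := by
          refine Finset.sum_congr rfl fun y _ => ?_
          exact sum_feedback (fun x b c => ∑ a, PS a * W x a b c)
            (fun b => ∑ z, ∑ s, PS s * W x0 s b z) hV f y
  -- total i.i.d. output mass is one
  have hQn1 : ∀ n : ℕ, ∑ y : Fin n → 𝒴, ∏ t, (∑ z, ∑ s, PS s * W x0 s (y t) z) = 1 := by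
    intro n
    calc ∑ y : Fin n → 𝒴, ∏ t, (∑ z, ∑ s, PS s * W x0 s (y t) z)
        = ∏ t : Fin n, ∑ b, ∑ z, ∑ s, PS s * W x0 s b z :=
          (Fintype.prod_sum fun (t : Fin n) (b : 𝒴) => ∑ z, ∑ s, PS s * W x0 s b z).symm
      _ = 1 := by
          rw [show (∑ b, ∑ z, ∑ s, PS s * W x0 s b z) = 1 from hWtsum x0]
          exact Finset.prod_const_one
  -- hence N_DIF = 1 for all admissible error parameters
  have hNDIF : ∀ (n : ℕ) (l1 l2 : ℝ), 0 < l1 → 0 < l2 → l1 + l2 < 1 →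
      NDIF W PS d h n l1 l2 D = 1 := by
    intro n l1 l2 hl1 hl2 hl12
    have hub : ∀ N, IsDIFCode W PS d h n N l1 l2 D → N ≤ 1 := by
      intro N hcode
      by_contra hN
      push_neg at hN
      obtain ⟨f, Ds, hA, hB, _⟩ := hcode
      have h2N : 2 ≤ N := hN
      set i0 : Fin N := ⟨0, by omega⟩ with hi0
      set i1 : Fin N := ⟨1, by omega⟩ with hi1
      have hne01 : i1 ≠ i0 := by
        intro hh
        have := congrArg Fin.val hh
        simp [hi0, hi1] at this
      have e1 := hA i0
      have e2 := hB i1 i0 hne01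
      rw [hErr] at e1 e2
      have hsplit : (∑ y ∈ (Ds i0)ᶜ, ∏ t, (∑ z, ∑ s, PS s * W x0 s (y t) z))
          + ∑ y ∈ Ds i0, ∏ t, (∑ z, ∑ s, PS s * W x0 s (y t) z) = 1 := by
        rw [Finset.sum_compl_add_sum]
        exact hQn1 n
      linarith
    have hmem : IsDIFCode W PS d h n 1 l1 l2 D := by
      refine ⟨fun _ => fun _ _ => x0, fun _ => Finset.univ, ?_, ?_, ?_⟩
      · intro i
        rw [hErr]
        simp only [Finset.compl_univ, Finset.sum_empty]
        exact le_of_lt hl1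
      · intro i j hij
        exact absurd (Subsingleton.elim i j) hij
      · intro i t
        rw [distAt_const W PS d h hW hPS x0 t]
        exact hx0
    unfold NDIF
    have hbdd : BddAbove {N | IsDIFCode W PS d h n N l1 l2 D} :=
      ⟨1, fun N hN => hub N hN⟩
    exact le_antisymm (csSup_le ⟨1, hmem⟩ fun N hN => hub N hN) (le_csSup hbdd hmem)
  -- hence the liminf is identically zero
  have hfun : ∀ l1 l2 : ℝ, 0 < l1 → 0 < l2 → l1 + l2 < 1 →
      (Filter.atTop.liminf fun n =>
        Real.log (Real.log (NDIF W PS d h n l1 l2 D)) / n) = 0 := by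
    intro l1 l2 h1 h2 h12
    have hz : (fun n : ℕ => Real.log (Real.log ((NDIF W PS d h n l1 l2 D : ℕ) : ℝ)) / n)
        = fun _ : ℕ => (0 : ℝ) := by
      funext n
      rw [hNDIF n l1 l2 h1 h2 h12]
      simp
    rw [hz, Filter.liminf_const]
  have mem0 : (0 : ℝ) ∈ {r | ∃ l1 l2 : ℝ, 0 < l1 ∧ 0 < l2 ∧ l1 + l2 < 1 ∧
      r = Filter.atTop.liminf fun n =>
        Real.log (Real.log (NDIF W PS d h n l1 l2 D)) / n} :=
    ⟨1/4, 1/4, by norm_num, by norm_num, by norm_num,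
      (hfun (1/4) (1/4) (by norm_num) (by norm_num) (by norm_num)).symm⟩
  unfold CDIF
  refine le_antisymm (csInf_le ⟨0, ?_⟩ mem0) (le_csInf ⟨0, mem0⟩ ?_)
  · rintro r ⟨l1, l2, h1, h2, h12, rfl⟩
    exact (hfun l1 l2 h1 h2 h12).ge
  · rintro r ⟨l1, l2, h1, h2, h12, rfl⟩
    exact (hfun l1 l2 h1 h2 h12).ge
end

section
/- Let D ≥ 0 and assume 𝒫_D is nonempty. If the transmission capacity of the forward marginal channel W̃ is zero, i.e., I(X;Y) = 0 under the joint law P_X(x)W̃(y|x) for every pmf P_X on 𝒳, then C_RIF(D) = 0. (Zero-capacity case of Theorem 2.) -/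
open Finset

variable {𝒳 𝒮 𝒴 𝒵 : Type*} [Fintype 𝒳] [Fintype 𝒮] [Fintype 𝒴] [Fintype 𝒵]
  [DecidableEq 𝒴] [DecidableEq 𝒵]

/-- `d*(P_X) = ∑_x P_X(x) d*(x)`. -/
noncomputable def dstarP (W : 𝒳 → 𝒮 → 𝒴 → 𝒵 → ℝ) (PS : 𝒮 → ℝ) (d : 𝒮 → 𝒮 → ℝ)
    (h : 𝒳 → 𝒵 → 𝒮) (pX : 𝒳 → ℝ) : ℝ :=
  ∑ x, pX x * dstar W PS d h x

/-- Existence of an `(n, N, l1, l2)` RIF code with sensing, per-symbol distortion `≤ D`. -/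
def IsRIFCode (W : 𝒳 → 𝒮 → 𝒴 → 𝒵 → ℝ) (PS : 𝒮 → ℝ) (d : 𝒮 → 𝒮 → ℝ) (h : 𝒳 → 𝒵 → 𝒮)
    (n N : ℕ) (l1 l2 D : ℝ) : Prop :=
  ∃ (Q : Fin N → EncFn 𝒳 𝒵 n → ℝ) (Ds : Fin N → Finset (Fin n → 𝒴)),
    (∀ i, IsPMF (Q i)) ∧
    (∀ i, (∑ f, Q i f * errMass W PS f (Ds i)ᶜ) ≤ l1) ∧
    (∀ i j, i ≠ j → (∑ f, Q i f * errMass W PS f (Ds j)) ≤ l2) ∧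
    (∀ i t, (∑ f, Q i f * distAt W PS d h f t) ≤ D)

/-- The maximal number of messages of an RIF code with sensing. -/
noncomputable def NRIF (W : 𝒳 → 𝒮 → 𝒴 → 𝒵 → ℝ) (PS : 𝒮 → ℝ) (d : 𝒮 → 𝒮 → ℝ)
    (h : 𝒳 → 𝒵 → 𝒮) (n : ℕ) (l1 l2 D : ℝ) : ℕ :=
  sSup {N | IsRIFCode W PS d h n N l1 l2 D}

/-- The RIF capacity-distortion function
`C_RIF(D) = inf_{λ1,λ2>0, λ1+λ2<1} liminf_n (log log N_RIF)/n`. -/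
noncomputable def CRIF (W : 𝒳 → 𝒮 → 𝒴 → 𝒵 → ℝ) (PS : 𝒮 → ℝ) (d : 𝒮 → 𝒮 → ℝ)
    (h : 𝒳 → 𝒵 → 𝒮) (D : ℝ) : ℝ :=
  sInf {r | ∃ l1 l2 : ℝ, 0 < l1 ∧ 0 < l2 ∧ l1 + l2 < 1 ∧
    r = Filter.atTop.liminf fun n =>
      Real.log (Real.log (NRIF W PS d h n l1 l2 D)) / n}

/-!
Zero capacity gives `I(X;Y) = 0` for the uniform input, so by the equality case of Gibbs'
inequality all rows of the marginal channel `W̃` coincide with one output law `q`. Feedback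
cannot help then: summing the `n`-letter law over `(z_t, s_t)` from the last letter backwards,
the output sequence has law `q^⊗n` whatever the encoder. A decoding set therefore has the same
probability under every message, and two messages `i ≠ j` would give
`λ1 + λ2 ≥ P(𝒟_jᶜ) + P(𝒟_j) = 1`. Hence `N_RIF ≤ 1`, and `log log N_RIF = 0` because
`Real.log 0 = 0`; so `C_RIF(D) = 0`.
-/

theorem Fintype.sum_prod_causal {R Z : Type*} [CommSemiring R] [Fintype Z] :
    ∀ {n : ℕ} (F : ∀ t : Fin n, (Fin t → Z) → Z → R) (c : Fin n → R),
    (∀ t hist, ∑ z, F t hist z = c t) →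
    ∑ z : Fin n → Z, ∏ t, F t (fun j => z (Fin.castLE t.isLt.le j)) (z t) = ∏ t, c t
  | 0, _, _, _ => by simp
  | n + 1, F, c, hc => by
    have split : ∀ (g : Fin n → Z) (a : Z),
        ∏ t, F t (fun j => Fin.snoc (α := fun _ => Z) g a (Fin.castLE t.isLt.le j))
          (Fin.snoc (α := fun _ => Z) g a t) =
        (∏ t : Fin n, F t.castSucc (fun j => g (Fin.castLE t.isLt.le j)) (g t)) *
          F (Fin.last n) g a := by
      intro g a
      rw [Fin.prod_univ_castSucc]
      congr 1
      · refine Finset.prod_congr rfl fun t _ => ?_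
        simp only [Fin.snoc_castSucc]
        congr 1
        funext j
        exact Fin.snoc_castSucc (α := fun _ => Z) (i := Fin.castLE t.isLt.le j) ..
      · simp only [Fin.snoc_last]
        congr 1
        funext j
        exact Fin.snoc_castSucc (α := fun _ => Z) (i := j) ..
    rw [← (Fin.snocEquiv fun _ => Z).sum_comp, Fintype.sum_prod_type, sum_comm]
    simp only [Fin.snocEquiv, Equiv.coe_fn_mk, split, ← mul_sum, hc, ← sum_mul,
      Fin.prod_univ_castSucc c]
    exact congrArg (· * c (Fin.last n)) (Fintype.sum_prod_causal _ _ fun t => hc t.castSucc)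

theorem IsPMF.nonempty {A : Type*} [Fintype A] {p : A → ℝ} (hp : IsPMF p) : Nonempty A := by
  by_contra hA
  rw [not_nonempty_iff] at hA
  simpa using hp.2

theorem isPMF_uniform (A : Type*) [Fintype A] [Nonempty A] :
    IsPMF fun _ : A => (Fintype.card A : ℝ)⁻¹ := by
  refine ⟨fun _ => by positivity, ?_⟩
  simp

open InformationTheory in
/-- Termwise `p log (p/q) = q klFun (p/q) + (p - q)`, and `klFun ≥ 0` vanishes only at `1`. -/
theorem eq_of_sum_mul_log_div_eq_zero {ι : Type*} [Fintype ι] {p q : ι → ℝ}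
    (hp : ∀ i, 0 ≤ p i) (hq : ∀ i, 0 ≤ q i) (hpq : ∀ i, q i = 0 → p i = 0)
    (hsum : ∑ i, p i = ∑ i, q i) (h : ∑ i, p i * Real.log (p i / q i) = 0) : p = q := by
  have term : ∀ i,
      p i * Real.log (p i / q i) = q i * klFun (p i / q i) + (p i - q i) := by
    intro i
    rcases (hq i).eq_or_lt with hqi | hqi
    · simp [← hqi, hpq i hqi.symm]
    · rw [klFun_apply]
      field_simp
      ring
  have hkl : ∑ i, q i * klFun (p i / q i) = 0 := by
    simpa [term, sum_add_distrib, sum_sub_distrib, hsum] using h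
  rw [sum_eq_zero_iff_of_nonneg fun i _ =>
    mul_nonneg (hq i) (klFun_nonneg (div_nonneg (hp i) (hq i)))] at hkl
  funext i
  rcases (hq i).eq_or_lt with hqi | hqi
  · rw [← hqi, hpq i hqi.symm]
  · have := (mul_eq_zero.1 (hkl i (mem_univ i))).resolve_left hqi.ne'
    rwa [klFun_eq_zero_iff (div_nonneg (hp i) (hq i)), div_eq_one_iff_eq hqi.ne'] at this

theorem eq_mul_marginals_of_mutInf_eq_zero {A B : Type*} [Fintype A] [Fintype B]
    {p : A → B → ℝ} (hp : ∀ a b, 0 ≤ p a b) (hsum : ∑ a, ∑ b, p a b = 1) (hI : mutInf p = 0)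
    (a : A) (b : B) : p a b = (∑ b', p a b') * ∑ a', p a' b := by
  have hle_left : ∀ a b, p a b ≤ ∑ b', p a b' := fun a b =>
    single_le_sum (fun b' _ => hp a b') (mem_univ b)
  have hle_right : ∀ a b, p a b ≤ ∑ a', p a' b := fun a b =>
    single_le_sum (fun a' _ => hp a' b) (mem_univ a)
  have hprod := eq_of_sum_mul_log_div_eq_zero (ι := A × B) (p := fun x => p x.1 x.2)
    (q := fun x => (∑ b', p x.1 b') * ∑ a', p a' x.2)
    (fun x => hp x.1 x.2)
    (fun x => mul_nonneg (sum_nonneg fun _ _ => hp _ _) (sum_nonneg fun _ _ => hp _ _))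
    (fun x hx => by
      rcases mul_eq_zero.1 hx with h0 | h0
      · exact le_antisymm (h0 ▸ hle_left x.1 x.2) (hp x.1 x.2)
      · exact le_antisymm (h0 ▸ hle_right x.1 x.2) (hp x.1 x.2))
    (by simp only [Fintype.sum_prod_type, ← mul_sum, ← sum_mul]
        rw [sum_comm (f := fun b a => p a b), hsum, one_mul])
    (by rw [Fintype.sum_prod_type]; exact hI)
  exact congrFun hprod (a, b)

theorem channel_rows_eq_of_capacity_eq_zero {X Y : Type*} [Fintype X] [Fintype Y]
    {V : X → Y → ℝ} (hV : ∀ x y, 0 ≤ V x y) (hrow : ∀ x, ∑ y, V x y = 1)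
    (hI : ∀ pX : X → ℝ, IsPMF pX → mutInf (fun x y => pX x * V x y) = 0) (x x' : X) :
    V x = V x' := by
  have : Nonempty X := ⟨x⟩
  have hu := isPMF_uniform X
  have hcard : (Fintype.card X : ℝ)⁻¹ ≠ 0 := by positivity
  have output : ∀ a b, V a b = ∑ a', (Fintype.card X : ℝ)⁻¹ * V a' b := by
    intro a b
    have := eq_mul_marginals_of_mutInf_eq_zero (fun a b => mul_nonneg (hu.1 a) (hV a b))
      (by simp only [← mul_sum, hrow, mul_one]; exact hu.2) (hI _ hu) a b
    rw [← mul_sum, hrow, mul_one] at this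
    exact mul_left_cancel₀ hcard this
  funext y
  rw [output x, output x']

section Channel

variable {X S Y Z : Type*} [Fintype S] [Fintype Z]

noncomputable def marginalChannel (W : X → S → Y → Z → ℝ) (PS : S → ℝ) (x : X) (y : Y) : ℝ :=
  ∑ z, ∑ s, PS s * W x s y z

theorem marginalChannel_nonneg {W : X → S → Y → Z → ℝ} {PS : S → ℝ}
    (hW : ∀ x s y z, 0 ≤ W x s y z) (hPS : ∀ s, 0 ≤ PS s) (x : X) (y : Y) :
    0 ≤ marginalChannel W PS x y :=
  sum_nonneg fun _ _ => sum_nonneg fun _ _ => mul_nonneg (hPS _) (hW _ _ _ _)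

theorem sum_marginalChannel [Fintype Y] {W : X → S → Y → Z → ℝ} {PS : S → ℝ}
    (hW : ∀ x s, ∑ y, ∑ z, W x s y z = 1) (hPS : ∑ s, PS s = 1) (x : X) :
    ∑ y, marginalChannel W PS x y = 1 := by
  calc ∑ y, marginalChannel W PS x y = ∑ s, PS s * ∑ y, ∑ z, W x s y z := by
        simp only [marginalChannel, mul_sum]
        exact (sum_congr rfl fun _ _ => sum_comm).trans sum_comm
    _ = 1 := by simp [hW, hPS]

theorem errMass_eq_sum_prod {W : X → S → Y → Z → ℝ} {PS : S → ℝ} {q : Y → ℝ}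
    (hq : ∀ x y, marginalChannel W PS x y = q y) {n : ℕ} (f : EncFn X Z n)
    (A : Finset (Fin n → Y)) : errMass W PS f A = ∑ y ∈ A, ∏ t, q (y t) := by
  have joint : ∀ y : Fin n → Y, ∑ z : Fin n → Z, ∑ s : Fin n → S,
      ∏ t, PS (s t) * W (f t fun j => z (Fin.castLE t.isLt.le j)) (s t) (y t) (z t) =
        ∏ t, q (y t) := by
    intro y
    rw [← Fintype.sum_prod_type',
      ← (Equiv.arrowProdEquivProdArrow (Fin n) (fun _ => Z) (fun _ => S)).sum_comp]
    exact Fintype.sum_prod_causal (Z := Z × S)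
      (fun t hist v => PS v.2 * W (f t fun j => (hist j).1) v.2 (y t) v.1) _
      fun t hist => by rw [Fintype.sum_prod_type]; exact hq _ _
  unfold errMass Wn
  simp_rw [mul_sum, ← prod_mul_distrib]
  rw [sum_congr rfl fun _ _ => sum_comm, sum_comm]
  exact sum_congr rfl fun y _ => joint y

end Channel

/-- Every decoding set has the same probability `∑ y ∈ A, ∏ t, q (y t)` under every message,
so two messages would force `l1 + l2 ≥ 1`. -/
theorem IsRIFCode.le_one {W : 𝒳 → 𝒮 → 𝒴 → 𝒵 → ℝ} {PS : 𝒮 → ℝ} {d : 𝒮 → 𝒮 → ℝ}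
    {h : 𝒳 → 𝒵 → 𝒮} {n N : ℕ} {l1 l2 D : ℝ} {q : 𝒴 → ℝ}
    (hq : ∀ x y, marginalChannel W PS x y = q y) (hq1 : ∑ y, q y = 1)
    (hcode : IsRIFCode W PS d h n N l1 l2 D) (hl : l1 + l2 < 1) : N ≤ 1 := by
  obtain ⟨Q, Ds, hQ, hmiss, hfalse, -⟩ := hcode
  have hmass : ∀ i A, ∑ f, Q i f * errMass W PS f A = ∑ y ∈ A, ∏ t, q (y t) := by
    intro i A
    simp_rw [errMass_eq_sum_prod hq, ← sum_mul, (hQ i).2, one_mul]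
  have htotal : ∑ y : Fin n → 𝒴, ∏ t, q (y t) = 1 := by
    rw [← Fintype.sum_pow, hq1, one_pow]
  by_contra! hN
  have e1 := hmiss ⟨0, by omega⟩
  have e2 := hfalse ⟨1, hN⟩ ⟨0, by omega⟩ (by simp [Fin.ext_iff])
  rw [hmass] at e1 e2
  linarith [sum_add_sum_compl (Ds ⟨0, by omega⟩) fun y => ∏ t, q (y t)]

theorem NRIF_le_one {W : 𝒳 → 𝒮 → 𝒴 → 𝒵 → ℝ} {PS : 𝒮 → ℝ} {d : 𝒮 → 𝒮 → ℝ}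
    {h : 𝒳 → 𝒵 → 𝒮} {n : ℕ} {l1 l2 D : ℝ} {q : 𝒴 → ℝ}
    (hq : ∀ x y, marginalChannel W PS x y = q y) (hq1 : ∑ y, q y = 1) (hl : l1 + l2 < 1) :
    NRIF W PS d h n l1 l2 D ≤ 1 :=
  csSup_le' fun _ hcode => hcode.le_one hq hq1 hl

theorem CRIF_eq_zero_of_NRIF_le_one {W : 𝒳 → 𝒮 → 𝒴 → 𝒵 → ℝ} {PS : 𝒮 → ℝ}
    {d : 𝒮 → 𝒮 → ℝ} {h : 𝒳 → 𝒵 → 𝒮} {D : ℝ}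
    (hN : ∀ n l1 l2, l1 + l2 < 1 → NRIF W PS d h n l1 l2 D ≤ 1) : CRIF W PS d h D = 0 := by
  have hrate : ∀ l1 l2, l1 + l2 < 1 →
      (fun n : ℕ => Real.log (Real.log (NRIF W PS d h n l1 l2 D)) / n) = fun _ => 0 := by
    intro l1 l2 hl
    funext n
    rcases Nat.le_one_iff_eq_zero_or_eq_one.1 (hN n l1 l2 hl) with h0 | h1
    · simp [h0]
    · simp [h1]
  have hrates : {r | ∃ l1 l2 : ℝ, 0 < l1 ∧ 0 < l2 ∧ l1 + l2 < 1 ∧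
      r = Filter.atTop.liminf fun n =>
        Real.log (Real.log (NRIF W PS d h n l1 l2 D)) / n} = {0} := by
    ext r
    simp only [Set.mem_ofPred_eq, Set.mem_singleton_iff]
    constructor
    · rintro ⟨l1, l2, -, -, hl, rfl⟩
      rw [hrate l1 l2 hl, Filter.liminf_const]
    · rintro rfl
      refine ⟨1 / 4, 1 / 4, by norm_num, by norm_num, by norm_num, ?_⟩
      rw [hrate _ _ (by norm_num), Filter.liminf_const]
  rw [CRIF, hrates, csInf_singleton]

theorem RIF_capacity_distortion_zero_general
    (W : 𝒳 → 𝒮 → 𝒴 → 𝒵 → ℝ) (PS : 𝒮 → ℝ) (d : 𝒮 → 𝒮 → ℝ) (h : 𝒳 → 𝒵 → 𝒮)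
    (hW : ∀ x s, (∀ y z, 0 ≤ W x s y z) ∧ ∑ y, ∑ z, W x s y z = 1)
    (hPS : IsPMF PS)
    (D : ℝ)
    (hne : ∃ pX : 𝒳 → ℝ, IsPMF pX ∧ dstarP W PS d h pX ≤ D)
    (hzero : ∀ pX : 𝒳 → ℝ, IsPMF pX →
      mutInf (fun x y => pX x * ∑ z, ∑ s, PS s * W x s y z) = 0) :
    CRIF W PS d h D = 0 := by
  obtain ⟨pX, hpX, -⟩ := hne
  obtain ⟨x₀⟩ := hpX.nonempty
  have hrows : ∀ x, marginalChannel W PS x = marginalChannel W PS x₀ :=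
    fun x => channel_rows_eq_of_capacity_eq_zero
      (marginalChannel_nonneg (fun x s => (hW x s).1) hPS.1)
      (sum_marginalChannel (fun x s => (hW x s).2) hPS.2) hzero x x₀
  exact CRIF_eq_zero_of_NRIF_le_one fun _ _ _ hl =>
    NRIF_le_one (fun x y => congrFun (hrows x) y)
      (sum_marginalChannel (fun x s => (hW x s).2) hPS.2 x₀) hl

/-- Zero-capacity case of Theorem 2: if the transmission capacity of the forward marginal
channel `W̃(y|x) = ∑_z ∑_s P_S(s) W(y,z|x,s)` is zero, i.e. `I(X;Y) = 0` for every input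
pmf, and `𝒫_D` is nonempty, then `C_RIF(D) = 0`. -/
theorem RIF_capacity_distortion_zero [Nonempty 𝒮]
    (W : 𝒳 → 𝒮 → 𝒴 → 𝒵 → ℝ) (PS : 𝒮 → ℝ) (d : 𝒮 → 𝒮 → ℝ) (h : 𝒳 → 𝒵 → 𝒮)
    (hW : ∀ x s, (∀ y z, 0 ≤ W x s y z) ∧ ∑ y, ∑ z, W x s y z = 1)
    (hPS : IsPMF PS) (hd : ∀ s s', 0 ≤ d s s')
    (hEst : ∀ (x : 𝒳) (z : 𝒵) (s' : 𝒮),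
      ∑ s, condS W PS x z s * d s (h x z) ≤ ∑ s, condS W PS x z s * d s s')
    (D : ℝ) (hD : 0 ≤ D)
    (hne : ∃ pX : 𝒳 → ℝ, IsPMF pX ∧ dstarP W PS d h pX ≤ D)
    (hzero : ∀ pX : 𝒳 → ℝ, IsPMF pX →
      mutInf (fun x y => pX x * ∑ z, ∑ s, PS s * W x s y z) = 0) :
    CRIF W PS d h D = 0 :=
  RIF_capacity_distortion_zero_general W PS d h hW hPS D hne hzero
end

section
/- Large-deviation hashing bound (Lemma of Ahlswede–Dueck used in the achievability proof): let T ≥ 1 and M' ≥ 2 be integers, let λ ∈ (1/M', 1), and let Γ_1, …, Γ_T be independent identically distributed Bernoulli random variables with success probability 1/M'. Then Pr[ (1/T) Σ_{t=1}^T Γ_t > λ ] < 2^{−T(λ log₂ M' − 1)}. -/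
open Finset MeasureTheory ProbabilityTheory

/-! Chernoff's bound with the exponent `t = log M'`: a `{0,1}`-valued variable `Γ` with
`Pr[Γ = 1] = p` has `E[M'^Γ] = 1 + (M' - 1) p`, which for `p = 1/M'` is `2 - 1/M' < 2`, so
`Pr[∑ Γ_t ≥ λT] ≤ M'^{-λT} (2 - 1/M')^T < 2^T M'^{-λT} = 2^{-T(λ log₂ M' - 1)}`. -/

lemma Real.exp_mul_of_eq_zero_or_eq_one {x : ℝ} (hx : x = 0 ∨ x = 1) (t : ℝ) :
    Real.exp (t * x) = 1 + (Real.exp t - 1) * x := by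
  rcases hx with rfl | rfl <;> simp

lemma Set.indicator_setOf_eq_one_of_eq_zero_or_eq_one {α : Type*} {f : α → ℝ}
    (hf : ∀ a, f a = 0 ∨ f a = 1) : {a | f a = 1}.indicator 1 = f := by
  ext a
  rcases hf a with h | h <;> simp [h]

namespace ProbabilityTheory

variable {Ω ι : Type*} [MeasurableSpace Ω] {μ : Measure Ω}

lemma integrable_exp_mul_of_eq_zero_or_eq_one [IsFiniteMeasure μ] {X : Ω → ℝ}
    (hX_meas : Measurable X) (hX : ∀ ω, X ω = 0 ∨ X ω = 1) (t : ℝ) :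
    Integrable (fun ω ↦ Real.exp (t * X ω)) μ := by
  simp_rw [Real.exp_mul_of_eq_zero_or_eq_one (hX _)]
  rw [← Set.indicator_setOf_eq_one_of_eq_zero_or_eq_one hX]
  exact (integrable_const 1).add
    (((integrable_const 1).indicator (hX_meas (measurableSet_singleton 1))).const_mul _)

lemma mgf_of_eq_zero_or_eq_one [IsProbabilityMeasure μ] {X : Ω → ℝ}
    (hX_meas : Measurable X) (hX : ∀ ω, X ω = 0 ∨ X ω = 1) (t : ℝ) :
    mgf X μ t = 1 + (Real.exp t - 1) * μ.real {ω | X ω = 1} := by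
  have hA : MeasurableSet {ω | X ω = 1} := hX_meas (measurableSet_singleton 1)
  simp_rw [mgf, Real.exp_mul_of_eq_zero_or_eq_one (hX _)]
  nth_rw 1 [← Set.indicator_setOf_eq_one_of_eq_zero_or_eq_one hX]
  rw [integral_add (integrable_const 1) (((integrable_const 1).indicator hA).const_mul _),
    integral_const_mul, integral_indicator_one hA]
  simp

lemma measureReal_le_sum_ge_le_of_eq_zero_or_eq_one [Fintype ι] [IsProbabilityMeasure μ]
    {X : ι → Ω → ℝ} (h_indep : iIndepFun X μ) (h_meas : ∀ i, Measurable (X i))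
    (hX : ∀ i ω, X i ω = 0 ∨ X i ω = 1) {p : ℝ} (hp : ∀ i, μ.real {ω | X i ω = 1} = p)
    (a : ℝ) {t : ℝ} (ht : 0 ≤ t) :
    μ.real {ω | a ≤ ∑ i, X i ω} ≤
      Real.exp (-t * a) * (1 + (Real.exp t - 1) * p) ^ Fintype.card ι := by
  have h_int : Integrable (fun ω ↦ Real.exp (t * (∑ i, X i) ω)) μ :=
    h_indep.integrable_exp_mul_sum h_meas
      fun i _ ↦ integrable_exp_mul_of_eq_zero_or_eq_one (h_meas i) (hX i) t
  have h_mgf : mgf (∑ i, X i) μ t = (1 + (Real.exp t - 1) * p) ^ Fintype.card ι := by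
    simp [h_indep.mgf_sum h_meas, mgf_of_eq_zero_or_eq_one (h_meas _) (hX _), hp]
  simpa [h_mgf] using measure_ge_le_exp_mul_mgf a ht h_int

end ProbabilityTheory

lemma Real.two_rpow_neg_mul_mul_logb_sub_one (m : ℝ) (T : ℕ) (lam : ℝ) :
    (2 : ℝ) ^ (-(T : ℝ) * (lam * Real.logb 2 m - 1)) =
      Real.exp (-Real.log m * (lam * T)) * 2 ^ T := by
  rw [Real.rpow_def_of_pos two_pos, ← Real.rpow_natCast, Real.rpow_def_of_pos two_pos,
    ← Real.exp_add, Real.logb]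
  congr 1
  field_simp
  ring

theorem hashing_large_deviation_bound_general
    {Ω : Type*} [MeasurableSpace Ω] (μ : Measure Ω) [IsProbabilityMeasure μ]
    (T M' : ℕ) (hT : 1 ≤ T) (hM : 2 ≤ M')
    (lam : ℝ)
    (Γ : Fin T → Ω → ℕ)
    (hmeas : ∀ t, Measurable (Γ t))
    (hval : ∀ t ω, Γ t ω = 0 ∨ Γ t ω = 1)
    (hindep : iIndepFun Γ μ)
    (hbern : ∀ t, (μ {ω | Γ t ω = 1}).toReal = 1 / (M' : ℝ)) :
    (μ {ω | lam < (T : ℝ)⁻¹ * ∑ t, (Γ t ω : ℝ)}).toReal <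
      2 ^ (-(T : ℝ) * (lam * Real.logb 2 M' - 1)) := by
  have hM_one : (1 : ℝ) < M' := by exact_mod_cast hM
  have hT_pos : (0 : ℝ) < T := by exact_mod_cast hT
  have h_sub :
      {ω | lam < (T : ℝ)⁻¹ * ∑ t, (Γ t ω : ℝ)} ⊆ {ω | lam * T ≤ ∑ t, (Γ t ω : ℝ)} :=
    fun ω hω ↦ by
      simp only [Set.mem_ofPred_eq, inv_mul_eq_div, lt_div_iff₀ hT_pos] at hω ⊢
      exact hω.le
  have h_chernoff := measureReal_le_sum_ge_le_of_eq_zero_or_eq_one (μ := μ)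
    (X := fun t ω ↦ (Γ t ω : ℝ)) (p := 1 / M')
    (hindep.comp _ fun _ ↦ measurable_from_nat) (fun t ↦ measurable_from_nat.comp (hmeas t))
    (fun t ω ↦ by rcases hval t ω with h | h <;> simp [h])
    (fun t ↦ by simpa [measureReal_def] using hbern t)
    (lam * T) (Real.log_nonneg hM_one.le)
  have h_base : 1 + (Real.exp (Real.log M') - 1) * (1 / M') = 2 - 1 / (M' : ℝ) := by
    rw [Real.exp_log (by linarith)]; field_simp; ring
  have h_base_lt : 2 - 1 / (M' : ℝ) < 2 := sub_lt_self 2 (by positivity)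
  have h_base_nonneg : 0 ≤ 2 - 1 / (M' : ℝ) := by
    linarith [(div_le_one (by linarith : (0 : ℝ) < M')).2 hM_one.le]
  rw [h_base, Fintype.card_fin] at h_chernoff
  calc (μ {ω | lam < (T : ℝ)⁻¹ * ∑ t, (Γ t ω : ℝ)}).toReal
      ≤ μ.real {ω | lam * T ≤ ∑ t, (Γ t ω : ℝ)} := measureReal_mono h_sub
    _ ≤ Real.exp (-Real.log M' * (lam * T)) * (2 - 1 / (M' : ℝ)) ^ T := h_chernoff
    _ < Real.exp (-Real.log M' * (lam * T)) * 2 ^ T :=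
      mul_lt_mul_of_pos_left (pow_lt_pow_left₀ h_base_lt h_base_nonneg (by omega))
        (Real.exp_pos _)
    _ = _ := (Real.two_rpow_neg_mul_mul_logb_sub_one M' T lam).symm

/-- Large-deviation hashing bound (Ahlswede–Dueck): if `Γ_1, …, Γ_T` are i.i.d.
Bernoulli(1/M') random variables and `1/M' < λ < 1`, then
`Pr[(1/T) ∑_t Γ_t > λ] < 2^{-T(λ log₂ M' - 1)}`. -/
theorem hashing_large_deviation_bound
    {Ω : Type*} [MeasurableSpace Ω] (μ : Measure Ω) [IsProbabilityMeasure μ]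
    (T M' : ℕ) (hT : 1 ≤ T) (hM : 2 ≤ M')
    (lam : ℝ) (hlam1 : 1 / (M' : ℝ) < lam) (hlam2 : lam < 1)
    (Γ : Fin T → Ω → ℕ)
    (hmeas : ∀ t, Measurable (Γ t))
    (hval : ∀ t ω, Γ t ω = 0 ∨ Γ t ω = 1)
    (hindep : iIndepFun Γ μ)
    (hbern : ∀ t, (μ {ω | Γ t ω = 1}).toReal = 1 / (M' : ℝ)) :
    (μ {ω | lam < (T : ℝ)⁻¹ * ∑ t, (Γ t ω : ℝ)}).toReal <
      2 ^ (-(T : ℝ) * (lam * Real.logb 2 M' - 1)) :=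
  hashing_large_deviation_bound_general μ T M' hT hM lam Γ hmeas hval hindep hbern
end

section
/- Union bound for random hash functions: let Θ be a nonempty finite set, let M' ≥ 2 and N ≥ 2 be integers, let λ ∈ (1/M', 1), and fix any function g : Θ → {1,…,M'}. Let F_1, …, F_{N−1} be independent, uniformly distributed random functions from Θ to {1,…,M'} (i.e., the values F_j(θ) for all j and θ are i.i.d. uniform on {1,…,M'}). Then Pr[ for all j ∈ {1,…,N−1}: |{θ ∈ Θ : F_j(θ) = g(θ)}| ≤ λ|Θ| ] ≥ 1 − (N−1)·2^{−|Θ|(λ log₂ M' − 1)}. -/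
open Finset MeasureTheory ProbabilityTheory

/-! If `F_j(θ) = g(θ)` for more than `λ|Θ|` points `θ`, then `F_j` agrees with `g` on some set of
`k = ⌈λ|Θ|⌉` points; by independence each such set has probability `M'^{-k}`, and there are at most
`2^|Θ|` of them. Since `k ≥ λ|Θ|`, this bounds the probability that `F_j` is bad by
`2^{|Θ|} M'^{-λ|Θ|}`, and a union bound over the `N - 1` functions concludes. -/

section

variable {Ω ι β : Type*} [MeasurableSpace Ω] {μ : Measure Ω}

lemma measureReal_forall_ge_one_sub_card_mul [IsProbabilityMeasure μ] [Fintype ι]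
    {P : ι → Ω → Prop} {b : ℝ} (h : ∀ i, μ.real {ω | ¬ P i ω} ≤ b) :
    1 - Fintype.card ι * b ≤ μ.real {ω | ∀ i, P i ω} := by
  have hcover : Set.univ ⊆ {ω | ∀ i, P i ω} ∪ ⋃ i, {ω | ¬ P i ω} := by
    intro ω _
    by_cases hω : ∀ i, P i ω
    · exact Or.inl hω
    · exact Or.inr (Set.mem_iUnion.2 (not_forall.1 hω))
  have hunion : μ.real (⋃ i, {ω | ¬ P i ω}) ≤ Fintype.card ι * b :=
    calc μ.real (⋃ i, {ω | ¬ P i ω}) ≤ ∑ i, μ.real {ω | ¬ P i ω} :=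
          measureReal_iUnion_fintype_le _
      _ ≤ ∑ _i : ι, b := sum_le_sum fun i _ => h i
      _ = Fintype.card ι * b := by rw [sum_const, card_univ, nsmul_eq_mul]
  have htotal := (probReal_univ (μ := μ)).symm.le.trans
    ((measureReal_mono hcover (measure_ne_top μ _)).trans (measureReal_union_le _ _))
  linarith

variable [MeasurableSpace β] [MeasurableSingletonClass β] {X : ι → Ω → β}

namespace ProbabilityTheory

lemma iIndepFun.measureReal_biInter_eq_pow (hX : iIndepFun X μ) (c : ι → β) {p : ℝ}
    (hp : ∀ i, μ.real {ω | X i ω = c i} = p) (s : Finset ι) :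
    μ.real (⋂ i ∈ s, {ω | X i ω = c i}) = p ^ #s := by
  have hprod := hX.measure_inter_preimage_eq_mul s (sets := fun i => {c i})
    (fun i _ => measurableSet_singleton _)
  rw [measureReal_def]
  simp only [Set.preimage, Set.mem_singleton_iff] at hprod
  rw [hprod, ENNReal.toReal_prod]
  exact (prod_congr rfl fun i _ => hp i).trans (prod_const _)

lemma iIndepFun.measureReal_le_card_eq_le_choose_mul_pow [Fintype ι] [DecidableEq β]
    [IsFiniteMeasure μ] (hX : iIndepFun X μ) (c : ι → β) {p : ℝ}
    (hp : ∀ i, μ.real {ω | X i ω = c i} = p) (k : ℕ) :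
    μ.real {ω | k ≤ #{i | X i ω = c i}} ≤ (Fintype.card ι).choose k * p ^ k := by
  have hcover : {ω | k ≤ #{i | X i ω = c i}} ⊆
      ⋃ s ∈ powersetCard k (univ : Finset ι), ⋂ i ∈ s, {ω | X i ω = c i} := by
    intro ω hω
    obtain ⟨s, hs, hcard⟩ := exists_subset_card_eq hω
    refine Set.mem_iUnion₂.2 ⟨s, mem_powersetCard.2 ⟨subset_univ s, hcard⟩, ?_⟩
    exact Set.mem_iInter₂.2 fun i hi => (mem_filter.1 (hs hi)).2
  calc μ.real {ω | k ≤ #{i | X i ω = c i}}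
      ≤ ∑ s ∈ powersetCard k (univ : Finset ι), μ.real (⋂ i ∈ s, {ω | X i ω = c i}) :=
        (measureReal_mono hcover (measure_ne_top μ _)).trans (measureReal_biUnion_finset_le _ _)
    _ = ∑ _s ∈ powersetCard k (univ : Finset ι), p ^ k :=
        sum_congr rfl fun s hs => by
          rw [hX.measureReal_biInter_eq_pow c hp, (mem_powersetCard.1 hs).2]
    _ = (Fintype.card ι).choose k * p ^ k := by
        rw [sum_const, card_powersetCard, card_univ, nsmul_eq_mul]

end ProbabilityTheory

end

lemma Nat.choose_mul_one_div_pow_le_two_rpow {n k : ℕ} {M lam : ℝ} (hM : 1 ≤ M)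
    (hk : lam * n ≤ k) :
    n.choose k * (1 / M) ^ k ≤ 2 ^ (-(n : ℝ) * (lam * Real.logb 2 M - 1)) := by
  have hM0 : 0 < M := by linarith
  have hchoose : (n.choose k : ℝ) ≤ 2 ^ (n : ℝ) := by
    rw [Real.rpow_natCast]
    exact_mod_cast n.choose_le_two_pow k
  have hpow : (1 / M) ^ k ≤ M ^ (-(lam * n)) := by
    rw [one_div, inv_pow, ← Real.rpow_natCast, ← Real.rpow_neg hM0.le]
    exact Real.rpow_le_rpow_of_exponent_le hM (neg_le_neg hk)
  calc n.choose k * (1 / M) ^ k ≤ 2 ^ (n : ℝ) * M ^ (-(lam * n)) := by gcongr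
    _ = 2 ^ (n : ℝ) * 2 ^ (Real.logb 2 M * -(lam * n)) := by
        rw [Real.rpow_mul zero_le_two, Real.rpow_logb two_pos (by norm_num) hM0]
    _ = 2 ^ (-(n : ℝ) * (lam * Real.logb 2 M - 1)) := by
        rw [← Real.rpow_add two_pos]
        ring_nf

theorem random_hash_union_bound_general
    {Ω Θ : Type*} [MeasurableSpace Ω] (μ : Measure Ω) [IsProbabilityMeasure μ]
    [Fintype Θ]
    (M' N : ℕ) (hM : 2 ≤ M') (hN : 2 ≤ N)
    (lam : ℝ)
    (g : Θ → Fin M')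
    (F : Fin (N - 1) → Θ → Ω → Fin M')
    (hindep : iIndepFun
      (fun (p : Fin (N - 1) × Θ) ω => F p.1 p.2 ω) μ)
    (hunif : ∀ j θ c, (μ {ω | F j θ ω = c}).toReal = 1 / (M' : ℝ)) :
    1 - ((N : ℝ) - 1) * 2 ^ (-(Fintype.card Θ : ℝ) * (lam * Real.logb 2 M' - 1)) ≤
      (μ {ω | ∀ j, (((univ.filter fun θ => F j θ ω = g θ).card : ℝ)) ≤
        lam * (Fintype.card Θ : ℝ)}).toReal := by
  set n := Fintype.card Θ
  have hbad : ∀ j, μ.real {ω | ¬ ((univ.filter fun θ => F j θ ω = g θ).card : ℝ) ≤ lam * n} ≤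
      2 ^ (-(n : ℝ) * (lam * Real.logb 2 M' - 1)) := fun j =>
    calc _ ≤ μ.real {ω | ⌈lam * n⌉₊ ≤ (univ.filter fun θ => F j θ ω = g θ).card} :=
          measureReal_mono fun ω hω => Nat.ceil_le.2 (not_le.1 hω).le
      _ ≤ n.choose ⌈lam * n⌉₊ * (1 / (M' : ℝ)) ^ ⌈lam * n⌉₊ :=
          (hindep.precomp (Prod.mk_right_injective j)).measureReal_le_card_eq_le_choose_mul_pow
            g (fun θ => hunif j θ (g θ)) _
      _ ≤ _ := Nat.choose_mul_one_div_pow_le_two_rpow (by exact_mod_cast hM.trans' one_le_two)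
          (Nat.le_ceil _)
  have hgood := measureReal_forall_ge_one_sub_card_mul hbad
  rwa [Fintype.card_fin, Nat.cast_sub (hN.trans' one_le_two), Nat.cast_one] at hgood

/-- Union bound for random hash functions: fix `g : Θ → [M']` and let
`F_1, …, F_{N-1} : Θ → [M']` be random functions whose values `F_j(θ)` are i.i.d. uniform
on `[M']`.  Then with probability at least `1 - (N-1)·2^{-|Θ|(λ log₂ M' - 1)}`, every `F_j`
agrees with `g` on at most `λ|Θ|` points. -/
theorem random_hash_union_bound
    {Ω Θ : Type*} [MeasurableSpace Ω] (μ : Measure Ω) [IsProbabilityMeasure μ]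
    [Fintype Θ] [Nonempty Θ] [DecidableEq Θ]
    (M' N : ℕ) (hM : 2 ≤ M') (hN : 2 ≤ N)
    (lam : ℝ) (hlam1 : 1 / (M' : ℝ) < lam) (hlam2 : lam < 1)
    (g : Θ → Fin M')
    (F : Fin (N - 1) → Θ → Ω → Fin M')
    (hmeas : ∀ j θ, Measurable (F j θ))
    (hindep : iIndepFun
      (fun (p : Fin (N - 1) × Θ) ω => F p.1 p.2 ω) μ)
    (hunif : ∀ j θ c, (μ {ω | F j θ ω = c}).toReal = 1 / (M' : ℝ)) :
    1 - ((N : ℝ) - 1) * 2 ^ (-(Fintype.card Θ : ℝ) * (lam * Real.logb 2 M' - 1)) ≤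
      (μ {ω | ∀ j, (((univ.filter fun θ => F j θ ω = g θ).card : ℝ)) ≤
        lam * (Fintype.card Θ : ℝ)}).toReal :=
  random_hash_union_bound_general μ M' N hM hN lam g F hindep hunif
end

section
/- Existence of a pairwise low-collision hash family (the combinatorial core of the identification code construction): let Θ be a nonempty finite set, let M' ≥ 2 and N ≥ 2 be integers, and let λ ∈ (1/M', 1). If N² · 2^{−|Θ|(λ log₂ M' − 1)} ≤ 1, then there exist functions F_1, …, F_N : Θ → {1,…,M'} such that for all i ≠ j in {1,…,N}, |{θ ∈ Θ : F_i(θ) = F_j(θ)}| ≤ λ|Θ|. -/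
/-!
Counting argument: for `k = ⌊λ|Θ|⌋ + 1`, a fixed pair of rows is forced to agree on a fixed
`k`-set by a proportion `M'^{-k}` of all families, so by the union bound over the `< N²` pairs
and `≤ 2^|Θ|` sets at most a proportion `N² 2^|Θ| M'^{-k}` of families has a pair colliding on
`k` or more points. The hypothesis makes `N² 2^|Θ| ≤ M'^{λ|Θ|} < M'^k`, so some family has none.
-/

open Finset

section Counting

variable {ι Θ β : Type*} [Fintype ι] [DecidableEq ι] [Fintype Θ] [DecidableEq Θ]
  [Fintype β] [DecidableEq β]

/-- Overwriting row `j` on `S` loses no information, since row `i` still remembers it. -/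
theorem card_filter_rows_eqOn_mul_pow_le {i j : ι} (hij : i ≠ j) (S : Finset Θ) :
    #{ω : ι → Θ → β | ∀ θ ∈ S, ω i θ = ω j θ} * Fintype.card β ^ #S ≤
      Fintype.card (ι → Θ → β) := by
  let overwrite (p : {ω : ι → Θ → β // ∀ θ ∈ S, ω i θ = ω j θ} × (S → β)) : ι → Θ → β :=
    fun l θ => if h : l = j ∧ θ ∈ S then p.2 ⟨θ, h.2⟩ else p.1.1 l θ
  have hinj : Function.Injective overwrite := by
    rintro ⟨⟨ω, hω⟩, g⟩ ⟨⟨ω', hω'⟩, g'⟩ heq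
    have hpt : ∀ l θ, overwrite (⟨ω, hω⟩, g) l θ = overwrite (⟨ω', hω'⟩, g') l θ :=
      fun l θ => congrFun (congrFun heq l) θ
    have hrow : ω = ω' := by
      funext l θ
      by_cases h : l = j ∧ θ ∈ S
      · obtain ⟨rfl, hθ⟩ := h
        simpa [overwrite, hij, ← hω θ hθ, ← hω' θ hθ] using hpt i θ
      · simpa [overwrite, h] using hpt l θ
    subst hrow
    refine Prod.ext rfl (funext fun ⟨θ, hθ⟩ => ?_)
    simpa [overwrite, hθ] using hpt j θ
  simpa [Fintype.card_subtype, Fintype.card_prod] using Fintype.card_le_of_injective _ hinj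

theorem card_filter_exists_collision_mul_pow_le (k : ℕ) :
    #{ω : ι → Θ → β | ∃ i j, i ≠ j ∧ k ≤ #{θ | ω i θ = ω j θ}} * Fintype.card β ^ k ≤
      Fintype.card ι ^ 2 * 2 ^ Fintype.card Θ * Fintype.card (ι → Θ → β) := by
  let agreeOn (p : ι × ι) (S : Finset Θ) : Finset (ι → Θ → β) :=
    {ω | ∀ θ ∈ S, ω p.1 θ = ω p.2 θ}
  have hcover : ({ω | ∃ i j, i ≠ j ∧ k ≤ #{θ | ω i θ = ω j θ}} : Finset (ι → Θ → β)) ⊆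
      (univ : Finset ι).offDiag.biUnion fun p => (powersetCard k univ).biUnion (agreeOn p) := by
    intro ω hω
    obtain ⟨i, j, hij, hk⟩ := (mem_filter.mp hω).2
    obtain ⟨S, hST, hS⟩ := exists_subset_card_eq hk
    simp only [mem_biUnion, mem_offDiag, mem_powersetCard]
    exact ⟨(i, j), ⟨mem_univ _, mem_univ _, hij⟩, S, ⟨subset_univ _, hS⟩,
      mem_filter.mpr ⟨mem_univ _, fun θ hθ => (mem_filter.mp (hST hθ)).2⟩⟩
  have hpair : ∀ p ∈ (univ : Finset ι).offDiag,
      #((powersetCard k univ).biUnion (agreeOn p)) * Fintype.card β ^ k ≤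
        2 ^ Fintype.card Θ * Fintype.card (ι → Θ → β) := by
    intro p hp
    have hp : p.1 ≠ p.2 := (mem_offDiag.mp hp).2.2
    calc #((powersetCard k univ).biUnion (agreeOn p)) * Fintype.card β ^ k
        ≤ (∑ S ∈ powersetCard k univ, #(agreeOn p S)) * Fintype.card β ^ k :=
          Nat.mul_le_mul_right _ card_biUnion_le
      _ = ∑ S ∈ powersetCard k univ, #(agreeOn p S) * Fintype.card β ^ #S := by
          rw [sum_mul]
          exact sum_congr rfl fun S hS => by rw [(mem_powersetCard.mp hS).2]
      _ ≤ #(powersetCard k (univ : Finset Θ)) * Fintype.card (ι → Θ → β) := by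
          rw [← smul_eq_mul]
          exact sum_le_card_nsmul _ _ _ fun S _ => card_filter_rows_eqOn_mul_pow_le hp S
      _ ≤ 2 ^ Fintype.card Θ * Fintype.card (ι → Θ → β) := by
          rw [card_powersetCard, card_univ]
          exact Nat.mul_le_mul_right _ (Nat.choose_le_two_pow _ _)
  calc _ ≤ #((univ : Finset ι).offDiag.biUnion fun p =>
          (powersetCard k univ).biUnion (agreeOn p)) * Fintype.card β ^ k :=
        Nat.mul_le_mul_right _ (card_le_card hcover)
    _ ≤ (∑ p ∈ (univ : Finset ι).offDiag,
          #((powersetCard k univ).biUnion (agreeOn p))) * Fintype.card β ^ k :=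
        Nat.mul_le_mul_right _ card_biUnion_le
    _ ≤ #(univ : Finset ι).offDiag * (2 ^ Fintype.card Θ * Fintype.card (ι → Θ → β)) := by
        rw [sum_mul, ← smul_eq_mul]
        exact sum_le_card_nsmul _ _ _ hpair
    _ ≤ Fintype.card ι ^ 2 * 2 ^ Fintype.card Θ * Fintype.card (ι → Θ → β) := by
        rw [mul_assoc, offDiag_card, card_univ, sq]
        exact Nat.mul_le_mul_right _ (Nat.sub_le _ _)

theorem exists_forall_card_collision_lt [Nonempty β] {k : ℕ}
    (hk : Fintype.card ι ^ 2 * 2 ^ Fintype.card Θ < Fintype.card β ^ k) :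
    ∃ ω : ι → Θ → β, ∀ i j, i ≠ j → #{θ | ω i θ = ω j θ} < k := by
  have hbad := card_filter_exists_collision_mul_pow_le (ι := ι) (Θ := Θ) (β := β) k
  have hlt : #{ω : ι → Θ → β | ∃ i j, i ≠ j ∧ k ≤ #{θ | ω i θ = ω j θ}} <
      #(univ : Finset (ι → Θ → β)) := by
    rw [card_univ]
    refine Nat.lt_of_mul_lt_mul_right (a := Fintype.card β ^ k) (hbad.trans_lt ?_)
    rw [mul_comm (Fintype.card (ι → Θ → β))]
    exact Nat.mul_lt_mul_of_pos_right hk Fintype.card_pos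
  obtain ⟨ω, -, hω⟩ := exists_mem_notMem_of_card_lt_card hlt
  exact ⟨ω, fun i j hij => not_le.mp fun h => hω (mem_filter.mpr ⟨mem_univ _, i, j, hij, h⟩)⟩

end Counting

theorem sq_mul_two_pow_lt_pow {M N n k : ℕ} (hM : 1 < M) {lam : ℝ} (hk : lam * n < k)
    (hcond : (N : ℝ) ^ 2 * 2 ^ (-(n : ℝ) * (lam * Real.logb 2 M - 1)) ≤ 1) :
    N ^ 2 * 2 ^ n < M ^ k := by
  set L := Real.logb 2 M
  have hL : 0 < L := Real.logb_pos one_lt_two (by exact_mod_cast hM)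
  have hM2 : (2 : ℝ) ^ L = M := Real.rpow_logb two_pos (by norm_num) (by positivity)
  have hreal : (N : ℝ) ^ 2 * 2 ^ n < (M : ℝ) ^ k := calc
    (N : ℝ) ^ 2 * 2 ^ n = N ^ 2 * 2 ^ (-(n : ℝ) * (lam * L - 1)) * 2 ^ (lam * n * L) := by
        rw [mul_assoc, ← Real.rpow_add two_pos, ← Real.rpow_natCast 2 n]
        ring_nf
    _ ≤ 2 ^ (lam * n * L) := mul_le_of_le_one_left (by positivity) hcond
    _ < 2 ^ (k * L) := Real.rpow_lt_rpow_of_exponent_lt one_lt_two (by nlinarith)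
    _ = M ^ k := by rw [← hM2, ← Real.rpow_natCast, ← Real.rpow_mul zero_le_two, mul_comm]
  exact_mod_cast hreal

theorem exists_pairwise_low_collision_hash_family_general
    {Θ : Type*} [Fintype Θ]
    (M' N : ℕ) (hM : 2 ≤ M')
    (lam : ℝ) (hlam1 : 1 / (M' : ℝ) < lam)
    (hcond : (N : ℝ) ^ 2 *
      2 ^ (-(Fintype.card Θ : ℝ) * (lam * Real.logb 2 M' - 1)) ≤ 1) :
    ∃ F : Fin N → Θ → Fin M', ∀ i j, i ≠ j →
      (((univ.filter fun θ => F i θ = F j θ).card : ℝ)) ≤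
        lam * (Fintype.card Θ : ℝ) := by
  classical
  have hnonneg : 0 ≤ lam * Fintype.card Θ :=
    mul_nonneg ((one_div_nonneg.mpr M'.cast_nonneg).trans hlam1.le) (Nat.cast_nonneg _)
  have : Nonempty (Fin M') := ⟨⟨0, by omega⟩⟩
  obtain ⟨F, hF⟩ := exists_forall_card_collision_lt (ι := Fin N) (Θ := Θ) (β := Fin M')
    (k := ⌊lam * Fintype.card Θ⌋₊ + 1) (by
      simpa using sq_mul_two_pow_lt_pow (by omega) (by exact_mod_cast Nat.lt_floor_add_one _) hcond)
  exact ⟨F, fun i j hij => (Nat.le_floor_iff hnonneg).mp (Nat.lt_succ_iff.mp (hF i j hij))⟩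

/-- Existence of a pairwise low-collision hash family: if
`N² · 2^{-|Θ|(λ log₂ M' - 1)} ≤ 1`, then there exist `N` functions `F_i : Θ → [M']`
any two of which collide on at most `λ|Θ|` points. -/
theorem exists_pairwise_low_collision_hash_family
    {Θ : Type*} [Fintype Θ] [Nonempty Θ] [DecidableEq Θ]
    (M' N : ℕ) (hM : 2 ≤ M') (hN : 2 ≤ N)
    (lam : ℝ) (hlam1 : 1 / (M' : ℝ) < lam) (hlam2 : lam < 1)
    (hcond : (N : ℝ) ^ 2 *
      2 ^ (-(Fintype.card Θ : ℝ) * (lam * Real.logb 2 M' - 1)) ≤ 1) :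
    ∃ F : Fin N → Θ → Fin M', ∀ i j, i ≠ j →
      (((univ.filter fun θ => F i θ = F j θ).card : ℝ)) ≤
        lam * (Fintype.card Θ : ℝ) :=
  exists_pairwise_low_collision_hash_family_general M' N hM lam hlam1 hcond
end

section
/- Mutual information identity used in the achievability proof of Theorem 2 (step (a)): let X, U, Z, Y be random variables on a probability space taking values in finite sets, and suppose U and Y are conditionally independent given the pair (X,Z) (i.e., U − (X,Z) − Y is a Markov chain). Then I((X,U);Y) = I(U;Z|X) + I(X;Y) − I(U;Z|(X,Y)), where I((X,U);Y) is the mutual information between the pair (X,U) and Y, I(U;Z|X) is the conditional mutual information of U and Z given X, and I(U;Z|(X,Y)) is the conditional mutual information of U and Z given the pair (X,Y). -/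
/-!
Cancelling the terms common to both sides leaves `H(X,Z) + H(X,U,Z,Y) = H(X,U,Z) + H(X,Z,Y)`,
i.e. `I(U;Y|X,Z) = 0`. By the Markov property each slice `f = p(x,·,z,·)` is the product of its
marginals divided by its mass, and for such an `f` (with `H` computed from unnormalized weights)
the joint entropy plus the entropy of the mass equals the sum of the marginal entropies.
-/

open Finset

/-- Shannon entropy of a pmf on a finite type. -/
noncomputable def ent {A : Type*} [Fintype A] (q : A → ℝ) : ℝ :=
  ∑ a, Real.negMulLog (q a)

open Real

section Factorization

variable {U Y : Type*} [Fintype U] [Fintype Y]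

theorem eq_zero_of_sum_sum_eq_zero {f : U → Y → ℝ} (hf : ∀ u y, 0 ≤ f u y)
    (hs : ∑ u, ∑ y, f u y = 0) (u : U) (y : Y) : f u y = 0 := by
  have hrow := (sum_eq_zero_iff_of_nonneg fun u _ => sum_nonneg fun y _ => hf u y).mp hs u
    (mem_univ u)
  exact (sum_eq_zero_iff_of_nonneg fun y _ => hf u y).mp hrow y (mem_univ y)

theorem eq_mul_div_of_div_eq_div_mul_div {f : U → Y → ℝ} (hf : ∀ u y, 0 ≤ f u y)
    (hind : (∑ u, ∑ y, f u y) ≠ 0 → ∀ u y,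
      f u y / (∑ u', ∑ y', f u' y') =
        ((∑ y', f u y') / (∑ u', ∑ y', f u' y')) * ((∑ u', f u' y) / (∑ u', ∑ y', f u' y')))
    (u : U) (y : Y) :
    f u y = (∑ y', f u y') * (∑ u', f u' y) / ∑ u', ∑ y', f u' y' := by
  by_cases hs : ∑ u', ∑ y', f u' y' = 0
  · rw [hs, div_zero, eq_zero_of_sum_sum_eq_zero hf hs]
  · have h := hind hs u y
    field_simp at h
    rw [eq_div_iff hs, h]

theorem sum_sum_negMulLog_add_negMulLog_sum_of_eq_mul_div (f : U → Y → ℝ)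
    (hf : ∀ u y, f u y = (∑ y', f u y') * (∑ u', f u' y) / ∑ u', ∑ y', f u' y') :
    ∑ u, ∑ y, negMulLog (f u y) + negMulLog (∑ u, ∑ y, f u y) =
      ∑ u, negMulLog (∑ y, f u y) + ∑ y, negMulLog (∑ u, f u y) := by
  set s := ∑ u, ∑ y, f u y
  by_cases hs : s = 0
  · have hzero : ∀ u y, f u y = 0 := fun u y => by rw [hf u y, hs, div_zero]
    simp [hzero, hs]
  have hcol : ∑ y, ∑ u, f u y = s := sum_comm
  have hterm : ∀ u y, negMulLog (f u y) =
      negMulLog (∑ y', f u y') / s * (∑ u', f u' y)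
        + (∑ y', f u y') * (negMulLog (∑ u', f u' y) / s)
        - (∑ y', f u y') * (∑ u', f u' y) * (negMulLog s / s ^ 2) := by
    intro u y
    rw [hf u y, div_eq_mul_inv, negMulLog_mul, negMulLog_mul]
    simp only [negMulLog, log_inv]
    field_simp
    ring
  simp only [hterm, sum_sub_distrib, sum_add_distrib, ← mul_sum, ← sum_mul, ← sum_div, hcol]
  field_simp
  ring

end Factorization

theorem mutual_information_markov_identity_general
    {𝒳 𝒰 𝒵 𝒴 : Type*} [Fintype 𝒳] [Fintype 𝒰] [Fintype 𝒵] [Fintype 𝒴]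
    (p : 𝒳 → 𝒰 → 𝒵 → 𝒴 → ℝ)
    (hp0 : ∀ x u z y, 0 ≤ p x u z y)
    -- conditional independence of `U` and `Y` given `(X,Z)`
    (hCI : ∀ x z, (∑ u, ∑ y, p x u z y) ≠ 0 → ∀ u y,
      (p x u z y) / (∑ u', ∑ y', p x u' z y') =
        ((∑ y', p x u z y') / (∑ u', ∑ y', p x u' z y')) *
          ((∑ u', p x u' z y) / (∑ u', ∑ y', p x u' z y'))) :
    -- I((X,U);Y)
    (ent (fun xu : 𝒳 × 𝒰 => ∑ z, ∑ y, p xu.1 xu.2 z y) +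
        ent (fun y : 𝒴 => ∑ x, ∑ u, ∑ z, p x u z y) -
        ent (fun xuy : (𝒳 × 𝒰) × 𝒴 => ∑ z, p xuy.1.1 xuy.1.2 z xuy.2)) =
      -- I(U;Z|X) = H(U,X) + H(Z,X) − H(U,Z,X) − H(X)
      (ent (fun xu : 𝒳 × 𝒰 => ∑ z, ∑ y, p xu.1 xu.2 z y) +
          ent (fun xz : 𝒳 × 𝒵 => ∑ u, ∑ y, p xz.1 u xz.2 y) -
          ent (fun xuz : (𝒳 × 𝒰) × 𝒵 => ∑ y, p xuz.1.1 xuz.1.2 xuz.2 y) -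
          ent (fun x : 𝒳 => ∑ u, ∑ z, ∑ y, p x u z y)) +
        -- I(X;Y) = H(X) + H(Y) − H(X,Y)
        (ent (fun x : 𝒳 => ∑ u, ∑ z, ∑ y, p x u z y) +
            ent (fun y : 𝒴 => ∑ x, ∑ u, ∑ z, p x u z y) -
            ent (fun xy : 𝒳 × 𝒴 => ∑ u, ∑ z, p xy.1 u z xy.2)) -
        -- I(U;Z|(X,Y)) = H(U,(X,Y)) + H(Z,(X,Y)) − H(U,Z,(X,Y)) − H(X,Y)
        (ent (fun xuy : (𝒳 × 𝒰) × 𝒴 => ∑ z, p xuy.1.1 xuy.1.2 z xuy.2) +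
            ent (fun xzy : (𝒳 × 𝒵) × 𝒴 => ∑ u, p xzy.1.1 u xzy.1.2 xzy.2) -
            ent (fun q : ((𝒳 × 𝒰) × 𝒵) × 𝒴 => p q.1.1.1 q.1.1.2 q.1.2 q.2) -
            ent (fun xy : 𝒳 × 𝒴 => ∑ u, ∑ z, p xy.1 u z xy.2)) := by
  have hMarkov : ∀ x z, ∑ u, ∑ y, negMulLog (p x u z y) +
      negMulLog (∑ u, ∑ y, p x u z y) =
      ∑ u, negMulLog (∑ y, p x u z y) + ∑ y, negMulLog (∑ u, p x u z y) :=
    fun x z => sum_sum_negMulLog_add_negMulLog_sum_of_eq_mul_div (fun u y => p x u z y)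
      (eq_mul_div_of_div_eq_div_mul_div (hp0 x · z ·) (hCI x z))
  have hMarkov_sum : ∑ x, ∑ z, ∑ u, ∑ y, negMulLog (p x u z y) +
      ∑ x, ∑ z, negMulLog (∑ u, ∑ y, p x u z y) =
      ∑ x, ∑ z, ∑ u, negMulLog (∑ y, p x u z y) +
        ∑ x, ∑ z, ∑ y, negMulLog (∑ u, p x u z y) := by
    simp only [← sum_add_distrib, hMarkov]
  have hXUZY_comm : ∑ x, ∑ z, ∑ u, ∑ y, negMulLog (p x u z y) =
      ∑ x, ∑ u, ∑ z, ∑ y, negMulLog (p x u z y) := sum_congr rfl fun _ _ => sum_comm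
  have hXUZ_comm : ∑ x, ∑ z, ∑ u, negMulLog (∑ y, p x u z y) =
      ∑ x, ∑ u, ∑ z, negMulLog (∑ y, p x u z y) := sum_congr rfl fun _ _ => sum_comm
  simp only [ent, Fintype.sum_prod_type]
  linarith

/-- Mutual information identity used in the achievability proof of Theorem 2:
if `U − (X,Z) − Y` is a Markov chain (i.e. `U` and `Y` are conditionally independent
given `(X,Z)`), then `I((X,U);Y) = I(U;Z|X) + I(X;Y) − I(U;Z|(X,Y))`, where all
(conditional) mutual informations are expressed via Shannon entropies of the joint pmf
`p` of `(X,U,Z,Y)`:  `I(A;B) = H(A) + H(B) − H(A,B)`,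
`I(A;B|C) = H(A,C) + H(B,C) − H(A,B,C) − H(C)`. -/
theorem mutual_information_markov_identity
    {𝒳 𝒰 𝒵 𝒴 : Type*} [Fintype 𝒳] [Fintype 𝒰] [Fintype 𝒵] [Fintype 𝒴]
    (p : 𝒳 → 𝒰 → 𝒵 → 𝒴 → ℝ)
    (hp0 : ∀ x u z y, 0 ≤ p x u z y)
    (hp1 : (∑ x, ∑ u, ∑ z, ∑ y, p x u z y) = 1)
    -- conditional independence of `U` and `Y` given `(X,Z)`
    (hCI : ∀ x z, (∑ u, ∑ y, p x u z y) ≠ 0 → ∀ u y,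
      (p x u z y) / (∑ u', ∑ y', p x u' z y') =
        ((∑ y', p x u z y') / (∑ u', ∑ y', p x u' z y')) *
          ((∑ u', p x u' z y) / (∑ u', ∑ y', p x u' z y'))) :
    -- I((X,U);Y)
    (ent (fun xu : 𝒳 × 𝒰 => ∑ z, ∑ y, p xu.1 xu.2 z y) +
        ent (fun y : 𝒴 => ∑ x, ∑ u, ∑ z, p x u z y) -
        ent (fun xuy : (𝒳 × 𝒰) × 𝒴 => ∑ z, p xuy.1.1 xuy.1.2 z xuy.2)) =
      -- I(U;Z|X) = H(U,X) + H(Z,X) − H(U,Z,X) − H(X)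
      (ent (fun xu : 𝒳 × 𝒰 => ∑ z, ∑ y, p xu.1 xu.2 z y) +
          ent (fun xz : 𝒳 × 𝒵 => ∑ u, ∑ y, p xz.1 u xz.2 y) -
          ent (fun xuz : (𝒳 × 𝒰) × 𝒵 => ∑ y, p xuz.1.1 xuz.1.2 xuz.2 y) -
          ent (fun x : 𝒳 => ∑ u, ∑ z, ∑ y, p x u z y)) +
        -- I(X;Y) = H(X) + H(Y) − H(X,Y)
        (ent (fun x : 𝒳 => ∑ u, ∑ z, ∑ y, p x u z y) +
            ent (fun y : 𝒴 => ∑ x, ∑ u, ∑ z, p x u z y) -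
            ent (fun xy : 𝒳 × 𝒴 => ∑ u, ∑ z, p xy.1 u z xy.2)) -
        -- I(U;Z|(X,Y)) = H(U,(X,Y)) + H(Z,(X,Y)) − H(U,Z,(X,Y)) − H(X,Y)
        (ent (fun xuy : (𝒳 × 𝒰) × 𝒴 => ∑ z, p xuy.1.1 xuy.1.2 z xuy.2) +
            ent (fun xzy : (𝒳 × 𝒵) × 𝒴 => ∑ u, p xzy.1.1 u xzy.1.2 xzy.2) -
            ent (fun q : ((𝒳 × 𝒰) × 𝒵) × 𝒴 => p q.1.1.1 q.1.1.2 q.1.2 q.2) -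
            ent (fun xy : 𝒳 × 𝒴 => ∑ u, ∑ z, p xy.1 u z xy.2)) :=
  mutual_information_markov_identity_general p hp0 hCI
end
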